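/- Let $\Omega \subset \mathbb{C}$ be open and connected, let $B_R \subset \Omega$ be a disk centered at $z_0$, and suppose $f : B_R \to \mathbb{C}$ admits a representation $f = e^{s} \cdot (F \circ \chi)$ where: $s : B_R \to \mathbb{C}$ is continuous, $\chi : \mathbb{C} \to \mathbb{C}$ is a homeomorphism whose inverse satisfies $|\chi^{-1}(z) - \chi^{-1}(\zeta)| \le C|z - \zeta|^{\eta}$ for some $C > 0$, $0 < \eta < 1$, and all $z, \zeta \in \chi(B_R)$, and $F$ is holomorphic on $\chi(B_R)$. If $f$ vanishes to infinite order at $z_0$ in the sense that for every $N \in \mathbb{N}$, $\sup_{|z - z_0| < r} |f(z)| = O(r^N)$ as $r \to 0$, then $f \equiv 0$ on $B_R$. -/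

import Mathlib

open Metric

/-- Unique continuation from the Bers–Nirenberg representation `f = eˢ · (F ∘ χ)`:
if `f` vanishes to infinite order at the center `z₀` then `f ≡ 0` on the disk. -/
theorem stmt_9 (Ω : Set ℂ) (hΩo : IsOpen Ω) (hΩc : IsConnected Ω)
    (z₀ : ℂ) (R : ℝ) (hR : 0 < R) (hsub : ball z₀ R ⊆ Ω)
    (f s F : ℂ → ℂ) (χ : ℂ ≃ₜ ℂ)
    (hs : ContinuousOn s (ball z₀ R))
    (hF : DifferentiableOn ℂ F (χ '' ball z₀ R))
    (hrep : ∀ z ∈ ball z₀ R, f z = Complex.exp (s z) * F (χ z))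
    (C η : ℝ) (hC : 0 < C) (hη0 : 0 < η) (hη1 : η < 1)
    (hhoelder : ∀ z ∈ χ '' ball z₀ R, ∀ ζ ∈ χ '' ball z₀ R,
      dist (χ.symm z) (χ.symm ζ) ≤ C * dist z ζ ^ η)
    (hvan : ∀ N : ℕ, ∃ C' > 0, ∃ r₀ > 0, ∀ r : ℝ, 0 < r → r < r₀ →
      ∀ z ∈ ball z₀ r, ‖f z‖ ≤ C' * r ^ N) :
    ∀ z ∈ ball z₀ R, f z = 0 := by
  have hz₀R : z₀ ∈ ball z₀ R := mem_ball_self hR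
  set U : Set ℂ := χ '' ball z₀ R with hUdef
  have hUo : IsOpen U := χ.isOpenMap _ isOpen_ball
  have hUpc : IsPreconnected U :=
    ((convex_ball z₀ R).isPreconnected).image _ χ.continuous.continuousOn
  have hFa : AnalyticOnNhd ℂ F U := hF.analyticOnNhd hUo
  have hw₀U : χ z₀ ∈ U := ⟨z₀, hz₀R, rfl⟩
  have hFw₀ : AnalyticAt ℂ F (χ z₀) := hFa _ hw₀U
  -- main claim: F vanishes in a neighbourhood of χ z₀
  have key : ∀ᶠ w in nhds (χ z₀), F w = 0 := by
    by_contra hne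
    have hord : analyticOrderAt F (χ z₀) ≠ ⊤ := fun h => hne (analyticOrderAt_eq_top.mp h)
    obtain ⟨n, hn⟩ := WithTop.ne_top_iff_exists.mp hord
    obtain ⟨g, hg, hg0, hgeq⟩ := (hFw₀.analyticOrderAt_eq_natCast (n := n)).mp hn.symm
    -- continuity of s at z₀ gives a lower bound for ‖exp (s z)‖
    have hsc : ContinuousAt s z₀ := hs.continuousAt (isOpen_ball.mem_nhds hz₀R)
    obtain ⟨δs, hδs, hsball⟩ := Metric.continuousAt_iff.mp hsc 1 one_pos
    set m : ℝ := Real.exp ((s z₀).re - 1) with hm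
    have hm0 : 0 < m := Real.exp_pos _
    have hexp_lb : ∀ z : ℂ, dist z z₀ < δs → m ≤ ‖Complex.exp (s z)‖ := by
      intro z hz
      have h1 : dist (s z) (s z₀) < 1 := hsball hz
      have h2 : |(s z - s z₀).re| ≤ ‖s z - s z₀‖ := Complex.abs_re_le_norm _
      rw [dist_eq_norm] at h1
      have h3 : (s z₀).re - 1 ≤ (s z).re := by
        have := (abs_le.mp (h2.trans h1.le)).1
        simp [Complex.sub_re] at this ⊢
        linarith
      rw [Complex.norm_exp]
      exact Real.exp_le_exp.mpr h3
    -- choose N with η N ≥ n + 1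
    set N : ℕ := ⌈((n : ℝ) + 1) / η⌉₊ with hNdef
    have hηN : (n : ℝ) + 1 ≤ η * N := by
      have h1 : ((n : ℝ) + 1) / η ≤ (N : ℝ) := Nat.le_ceil _
      calc (n : ℝ) + 1 = η * (((n : ℝ) + 1) / η) := by field_simp
        _ ≤ η * N := by
            exact mul_le_mul_of_nonneg_left h1 hη0.le
    obtain ⟨C', hC', r₀, hr₀, hbound⟩ := hvan N
    -- neighbourhood where the factorization and the lower bound for g hold
    have hgc : ContinuousAt g (χ z₀) := hg.continuousAt
    set c : ℝ := ‖g (χ z₀)‖ / 2 with hcdef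
    have hc0 : 0 < c := by
      have : 0 < ‖g (χ z₀)‖ := norm_pos_iff.mpr hg0
      positivity
    have hglb : ∀ᶠ w in nhds (χ z₀), c ≤ ‖g w‖ := by
      have : ∀ᶠ w in nhds (χ z₀), ‖g w‖ ∈ Set.Ioi c := by
        apply hgc.norm.eventually_mem
        have : c < ‖g (χ z₀)‖ := by
          have : 0 < ‖g (χ z₀)‖ := norm_pos_iff.mpr hg0
          rw [hcdef]; linarith
        exact Ioi_mem_nhds this
      exact this.mono fun w hw => le_of_lt hw
    obtain ⟨δg, hδg, hgball⟩ := Metric.eventually_nhds_iff.mp (hgeq.and hglb)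
    obtain ⟨δU, hδU, hUball⟩ := Metric.isOpen_iff.mp hUo _ hw₀U
    -- cap on the radius so that 2 C d^η < min r₀ δs
    set T : ℝ := min r₀ δs with hTdef
    have hT0 : 0 < T := lt_min hr₀ hδs
    set δp : ℝ := (T / (2 * C)) ^ (1 / η) with hδpdef
    have hδp0 : 0 < δp := Real.rpow_pos_of_pos (by positivity) _
    have hδp : ∀ d : ℝ, 0 < d → d < δp → 2 * C * d ^ η < T := by
      intro d hd0 hdδ
      have h1 : d ^ η < δp ^ η := by
        apply Real.rpow_lt_rpow hd0.le hdδ hη0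
      have h2 : δp ^ η = T / (2 * C) := by
        rw [hδpdef, ← Real.rpow_mul (by positivity), one_div,
          inv_mul_cancel₀ hη0.ne', Real.rpow_one]
      rw [h2] at h1
      calc 2 * C * d ^ η < 2 * C * (T / (2 * C)) := by
            exact mul_lt_mul_of_pos_left h1 (by positivity)
        _ = T := by field_simp
    -- the constant K₂ and the final small radius d*
    set K : ℝ := C' * (2 * C) ^ N / m with hKdef
    have hK0 : 0 < K := by positivity
    set e : ℝ := η * N - n with hedef
    have he0 : 0 < e := by rw [hedef]; linarith
    set dstar : ℝ := min (min (min δg δU) δp / 2) ((c / (2 * K)) ^ (1 / e)) with hddef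
    have hd0 : 0 < dstar := by
      apply lt_min
      · positivity
      · exact Real.rpow_pos_of_pos (by positivity) _
    have hdδg : dstar < δg := by
      have := min_le_left (min (min δg δU) δp / 2) ((c / (2 * K)) ^ (1 / e))
      have h2 : min (min δg δU) δp / 2 < min δg δU := by
        have : 0 < min (min δg δU) δp := lt_min (lt_min hδg hδU) hδp0
        have h3 : min (min δg δU) δp / 2 < min (min δg δU) δp := by linarith
        exact h3.trans_le (min_le_left _ _)
      calc dstar ≤ min (min δg δU) δp / 2 := this
        _ < min δg δU := h2
        _ ≤ δg := min_le_left _ _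
    have hdδU : dstar < δU := by
      have := min_le_left (min (min δg δU) δp / 2) ((c / (2 * K)) ^ (1 / e))
      have h3 : min (min δg δU) δp / 2 < min (min δg δU) δp := by
        have : 0 < min (min δg δU) δp := lt_min (lt_min hδg hδU) hδp0
        linarith
      calc dstar ≤ min (min δg δU) δp / 2 := this
        _ < min (min δg δU) δp := h3
        _ ≤ min δg δU := min_le_left _ _
        _ ≤ δU := min_le_right _ _
    have hdδp : dstar < δp := by
      have := min_le_left (min (min δg δU) δp / 2) ((c / (2 * K)) ^ (1 / e))
      have h3 : min (min δg δU) δp / 2 < min (min δg δU) δp := by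
        have : 0 < min (min δg δU) δp := lt_min (lt_min hδg hδU) hδp0
        linarith
      calc dstar ≤ min (min δg δU) δp / 2 := this
        _ < min (min δg δU) δp := h3
        _ ≤ δp := min_le_right _ _
    have hdsmall : K * dstar ^ e ≤ c / 2 := by
      have h1 : dstar ≤ (c / (2 * K)) ^ (1 / e) := min_le_right _ _
      have h2 : dstar ^ e ≤ ((c / (2 * K)) ^ (1 / e)) ^ e :=
        Real.rpow_le_rpow hd0.le h1 he0.le
      have h3 : ((c / (2 * K)) ^ (1 / e) : ℝ) ^ e = c / (2 * K) := by
        rw [← Real.rpow_mul (by positivity), one_div,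
          inv_mul_cancel₀ he0.ne', Real.rpow_one]
      rw [h3] at h2
      calc K * dstar ^ e ≤ K * (c / (2 * K)) := by
            exact mul_le_mul_of_nonneg_left h2 hK0.le
        _ = c / 2 := by field_simp
    -- the witness point w
    set w : ℂ := χ z₀ + (dstar : ℂ) with hwdef
    have hdist : dist w (χ z₀) = dstar := by
      rw [hwdef, dist_eq_norm, add_sub_cancel_left, Complex.norm_real,
        Real.norm_of_nonneg hd0.le]
    have hwU : w ∈ U := hUball (by rw [mem_ball, hdist]; exact hdδU)
    obtain ⟨z, hzball, hzw⟩ := id hwU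
    have hzsymm : χ.symm w = z := by rw [← hzw]; exact χ.symm_apply_apply z
    -- Hölder estimate
    have hhold : dist z z₀ ≤ C * dstar ^ η := by
      have := hhoelder w hwU (χ z₀) hw₀U
      rw [hzsymm, χ.symm_apply_apply, hdist] at this
      exact this
    set r : ℝ := 2 * C * dstar ^ η with hrdef
    have hdη0 : 0 < dstar ^ η := Real.rpow_pos_of_pos hd0 _
    have hr0 : 0 < r := by positivity
    have hrT : r < T := hδp dstar hd0 hdδp
    have hrr₀ : r < r₀ := hrT.trans_le (min_le_left _ _)
    have hrδs : r < δs := hrT.trans_le (min_le_right _ _)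
    have hzr : z ∈ ball z₀ r := by
      rw [mem_ball]
      calc dist z z₀ ≤ C * dstar ^ η := hhold
        _ < 2 * C * dstar ^ η := by nlinarith
    have hzδs : dist z z₀ < δs := lt_trans (mem_ball.mp hzr) hrδs
    -- upper bound
    have hub : ‖f z‖ ≤ C' * r ^ N := hbound r hr0 hrr₀ z hzr
    -- factorization
    have hfz : f z = Complex.exp (s z) * F w := by
      rw [hrep z hzball, hzw]
    obtain ⟨hFeq, hglbw⟩ := hgball (show dist w (χ z₀) < δg by rw [hdist]; exact hdδg)
    have hFnorm : dstar ^ (n : ℝ) * c ≤ ‖F w‖ := by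
      rw [hFeq]
      rw [smul_eq_mul, norm_mul, norm_pow]
      have h1 : ‖w - χ z₀‖ = dstar := by rw [← dist_eq_norm]; exact hdist
      rw [h1, ← Real.rpow_natCast dstar n]
      exact mul_le_mul_of_nonneg_left hglbw (le_of_lt (Real.rpow_pos_of_pos hd0 _))
    -- combine
    have hcomb : m * (dstar ^ (n : ℝ) * c) ≤ C' * r ^ N := by
      calc m * (dstar ^ (n : ℝ) * c) ≤ ‖Complex.exp (s z)‖ * ‖F w‖ := by
            apply mul_le_mul (hexp_lb z hzδs) hFnorm (by positivity)
              (norm_nonneg _)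
        _ = ‖f z‖ := by rw [hfz, norm_mul]
        _ ≤ C' * r ^ N := hub
    have hrN : (r : ℝ) ^ N = (2 * C) ^ N * dstar ^ (η * N) := by
      rw [hrdef, mul_pow, ← Real.rpow_natCast (dstar ^ η) N,
        ← Real.rpow_mul hd0.le]
    have hfinal : c * dstar ^ (n : ℝ) ≤ K * dstar ^ (η * N) := by
      rw [hrN] at hcomb
      have hKeq : K * dstar ^ (η * (N : ℝ)) =
          C' * (2 * C) ^ N * dstar ^ (η * (N : ℝ)) / m := by
        rw [hKdef]; ring
      rw [hKeq, le_div_iff₀ hm0]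
      calc c * dstar ^ (n : ℝ) * m = m * (dstar ^ (n : ℝ) * c) := by ring
        _ ≤ C' * ((2 * C) ^ N * dstar ^ (η * N)) := hcomb
        _ = C' * (2 * C) ^ N * dstar ^ (η * N) := by ring
    -- divide by dstar ^ n
    have hsplit : dstar ^ (η * (N : ℝ)) = dstar ^ e * dstar ^ (n : ℝ) := by
      rw [← Real.rpow_add hd0]
      congr 1
      rw [hedef]; ring
    have hdn0 : 0 < dstar ^ (n : ℝ) := Real.rpow_pos_of_pos hd0 _
    have hc_le : c ≤ K * dstar ^ e := by
      rw [hsplit] at hfinal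
      have := hfinal
      rw [show K * (dstar ^ e * dstar ^ (n : ℝ)) = K * dstar ^ e * dstar ^ (n : ℝ) by ring]
        at this
      exact le_of_mul_le_mul_right this hdn0
    linarith [hdsmall, hc_le]
  -- identity theorem
  have hF0 : Set.EqOn F 0 U :=
    hFa.eqOn_zero_of_preconnected_of_eventuallyEq_zero hUpc hw₀U
      (by filter_upwards [key] with w hw; simpa using hw)
  intro z hz
  rw [hrep z hz, hF0 ⟨z, hz, rfl⟩, Pi.zero_apply, mul_zero]
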